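/- For every μ > H̄*, every p ∈ ℝ^d and every x ∈ ℝ^d: liminf_{|y|→∞} |y|^{-1} ( m_μ(y,x) − p·y ) ≥ 0 if and only if μ ≥ H̄₊(p). -/

import Mathlib

open MeasureTheory Filter Topology Bornology
open scoped RealInnerProductSpace NNReal

noncomputable section

/-- Euclidean space ℝ^d. -/
abbrev Ed (d : ℕ) := EuclideanSpace ℝ (Fin d)

/-- The set 𝓛 of globally Lipschitz real-valued functions on ℝ^d. -/
def LipFuns (d : ℕ) : Set (Ed d → ℝ) := {w | ∃ C : ℝ≥0, LipschitzWith C w}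

/-- SL⁺ : Lipschitz functions sublinear from below, i.e. liminf_{|y|→∞} w(y)/|y| ≥ 0. -/
def SLplus (d : ℕ) : Set (Ed d → ℝ) :=
  {w | w ∈ LipFuns d ∧ ∀ ε : ℝ, 0 < ε → ∃ R : ℝ, ∀ y : Ed d, R ≤ ‖y‖ → -ε ≤ w y / ‖y‖}

/-- SL⁻ : Lipschitz functions sublinear from above, i.e. limsup_{|y|→∞} w(y)/|y| ≤ 0. -/
def SLminus (d : ℕ) : Set (Ed d → ℝ) :=
  {w | w ∈ LipFuns d ∧ ∀ ε : ℝ, 0 < ε → ∃ R : ℝ, ∀ y : Ed d, R ≤ ‖y‖ → w y / ‖y‖ ≤ ε}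

/-- 𝓢 : Lipschitz functions strictly sublinear at infinity. -/
def Scal (d : ℕ) : Set (Ed d → ℝ) := SLplus d ∩ SLminus d

/-- H̄₊(p) = inf_{w ∈ SL⁺} esssup_y H(p + Dw(y), y). -/
def HbarPlus (d : ℕ) (H : Ed d → Ed d → ℝ) (p : Ed d) : ℝ :=
  sInf {t | ∃ w ∈ SLplus d, t = essSup (fun y => H (p + gradient w y) y) volume}

/-- H̄₋(p) = inf_{w ∈ SL⁻} esssup_y H(p + Dw(y), y). -/
def HbarMinus (d : ℕ) (H : Ed d → Ed d → ℝ) (p : Ed d) : ℝ :=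
  sInf {t | ∃ w ∈ SLminus d, t = essSup (fun y => H (p + gradient w y) y) volume}

/-- Ĥ(p) = inf_{w ∈ 𝓢} esssup_y H(p + Dw(y), y). -/
def Hhat (d : ℕ) (H : Ed d → Ed d → ℝ) (p : Ed d) : ℝ :=
  sInf {t | ∃ w ∈ Scal d, t = essSup (fun y => H (p + gradient w y) y) volume}

/-- H̄* = inf_{w ∈ 𝓛} esssup_y H(Dw(y), y). -/
def Hstar (d : ℕ) (H : Ed d → Ed d → ℝ) : ℝ :=
  sInf {t | ∃ w ∈ LipFuns d, t = essSup (fun y => H (gradient w y) y) volume}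

/-- m_μ(y,x) = sup { w(y) − w(x) : w ∈ 𝓛, H(Dw,z) ≤ μ a.e. }. -/
def mMu (d : ℕ) (H : Ed d → Ed d → ℝ) (μ : ℝ) (y x : Ed d) : ℝ :=
  sSup {t | ∃ w ∈ LipFuns d, (∀ᵐ z ∂volume, H (gradient w z) z ≤ μ) ∧ t = w y - w x}

/-- Viscosity subsolution of F(Du, y) ≤ μ in U. -/
def ViscSub (d : ℕ) (F : Ed d → Ed d → ℝ) (μ : ℝ) (U : Set (Ed d)) (u : Ed d → ℝ) : Prop :=
  ∀ (φ : Ed d → ℝ) (x₀ : Ed d), x₀ ∈ U → ContDiffAt ℝ 1 φ x₀ →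
    IsLocalMaxOn (fun y => u y - φ y) U x₀ → F (gradient φ x₀) x₀ ≤ μ

/-- Viscosity supersolution of F(Dv, y) ≥ μ in U. -/
def ViscSuper (d : ℕ) (F : Ed d → Ed d → ℝ) (μ : ℝ) (U : Set (Ed d)) (v : Ed d → ℝ) : Prop :=
  ∀ (φ : Ed d → ℝ) (x₀ : Ed d), x₀ ∈ U → ContDiffAt ℝ 1 φ x₀ →
    IsLocalMinOn (fun y => v y - φ y) U x₀ → μ ≤ F (gradient φ x₀) x₀ 

/-!
Since `μ > H̄*` there is a Lipschitz `u` with `H(Du) ≤ a < μ` a.e. By coercivity every Lipschitz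
`w` with `H(Dw) ≤ μ` a.e. is `L`-Lipschitz for one `L` (the a.e. gradient bound is carried to
segments by mollification), so `m = m_μ(·, x)` is Lipschitz. It is itself such a `w`: where `m`
is differentiable with `H(Dm) > μ`, a half-space separating `Dm` from the convex sublevel set
`{H(·, z₀) ≤ μ}` still contains, by uniform continuity, the gradients of all competitors near
`z₀`, which bounds the directional derivative of `m`. Hence if `m - p·y` is sublinear from below,
it is a competitor for `H̄₊(p)`, and `H̄₊(p) ≤ μ`.

Conversely, take `w ∈ SL⁺` with `H(p + Dw) ≤ μ + s`. Averaging `u` `k` times with `p·y + w`,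
strict quasiconvexity keeps the gradient of `(1 - 2⁻ᵏ)(p·y + w) + 2⁻ᵏu` in the sublevel set of
`Λ(⋯Λ(a, μ + s)⋯, μ + s)`, which is `< μ` for `s` small. Comparing `m` with this competitor gives
`liminf (m - p·y)/|y| ≥ -2⁻ᵏ Lip(u - p·y)` for every `k`.
-/

section Gradient

variable {E : Type*} [NormedAddCommGroup E] [InnerProductSpace ℝ E] [CompleteSpace E]
  {f g : E → ℝ} {f' g' x : E}

theorem HasGradientAt.add (hf : HasGradientAt f f' x) (hg : HasGradientAt g g' x) :
    HasGradientAt (fun y => f y + g y) (f' + g') x := by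
  rw [hasGradientAt_iff_hasFDerivAt] at *
  simpa only [map_add] using hf.fun_add hg

theorem HasGradientAt.sub (hf : HasGradientAt f f' x) (hg : HasGradientAt g g' x) :
    HasGradientAt (fun y => f y - g y) (f' - g') x := by
  rw [hasGradientAt_iff_hasFDerivAt] at *
  simpa only [map_sub] using hf.fun_sub hg

theorem HasGradientAt.const_mul (c : ℝ) (hf : HasGradientAt f f' x) :
    HasGradientAt (fun y => c * f y) (c • f') x := by
  rw [hasGradientAt_iff_hasFDerivAt] at *
  simpa only [map_smulₛₗ, RCLike.conj_to_real] using hf.const_mul c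

theorem hasGradientAt_inner_const (p x : E) : HasGradientAt (fun y => ⟪p, y⟫) p x := by
  rw [hasGradientAt_iff_hasFDerivAt]
  exact (InnerProductSpace.toDual ℝ E p).hasFDerivAt

theorem norm_gradient_le_of_lipschitzWith {C : ℝ≥0} (hf : LipschitzWith C f) (x : E) :
    ‖gradient f x‖ ≤ C := by
  rw [gradient, LinearIsometryEquiv.norm_map]
  exact norm_fderiv_le_of_lipschitz ℝ hf

theorem hasDerivAt_comp_add_smul {a v : E} {t : ℝ} (hf : DifferentiableAt ℝ f (a + t • v)) :
    HasDerivAt (fun s : ℝ => f (a + s • v)) ⟪gradient f (a + t • v), v⟫ t := by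
  rw [inner_gradient_left]
  refine hf.hasFDerivAt.comp_hasDerivAt t ?_
  simpa using ((hasDerivAt_id t).smul_const v).const_add a

theorem inner_gradient_le_of_eventually_sub_le {z₀ e : E} {c : ℝ}
    (hf : DifferentiableAt ℝ f z₀)
    (h : ∀ᶠ t in 𝓝[>] (0 : ℝ), f (z₀ + t • e) - f z₀ ≤ t * c) :
    ⟪gradient f z₀, e⟫ ≤ c := by
  have hline := hasDerivAt_comp_add_smul (a := z₀) (v := e) (t := 0) (by simpa using hf)
  simp only [zero_smul, add_zero] at hline
  refine le_of_tendsto ((hasDerivAt_iff_tendsto_slope.mp hline).mono_left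
    (nhdsWithin_mono 0 fun t (ht : t ∈ Set.Ioi 0) => ne_of_gt ht)) ?_
  filter_upwards [h, self_mem_nhdsWithin] with t ht ht0
  rw [slope_def_field, sub_zero, div_le_iff₀ (Set.mem_Ioi.mp ht0)]
  simpa [mul_comm] using ht

theorem measurable_inner_gradient [MeasurableSpace E] [OpensMeasurableSpace E]
    [SecondCountableTopology E] (f : E → ℝ) (v : E) :
    Measurable fun y => ⟪gradient f y, v⟫ := by
  simp_rw [inner_gradient_left]
  exact (ContinuousLinearMap.apply ℝ ℝ v).continuous.measurable.comp (measurable_fderiv ℝ f)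

end Gradient

section Mollification

open scoped Convolution

variable {E : Type*} [NormedAddCommGroup E] [InnerProductSpace ℝ E] [FiniteDimensional ℝ E]
  [MeasurableSpace E] [BorelSpace E] {μ : Measure E} [μ.IsAddHaarMeasure]
  {C : ℝ≥0} {f : E → ℝ}

theorem hasDerivAt_convolution_comp_add_smul {φ : E → ℝ} (hφ : Continuous φ)
    (hφc : HasCompactSupport φ) (hf : LipschitzWith C f) (a v : E) (t : ℝ) :
    HasDerivAt (fun s => (φ ⋆[ContinuousLinearMap.lsmul ℝ ℝ, μ] f) (a + s • v))
      ((φ ⋆[ContinuousLinearMap.lsmul ℝ ℝ, μ] fun y => ⟪gradient f y, v⟫) (a + t • v)) t := by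
  simp only [convolution_lsmul, smul_eq_mul]
  have hφi : Integrable φ μ := hφ.integrable_of_hasCompactSupport hφc
  refine (hasDerivAt_integral_of_dominated_loc_of_lip (bound := fun z => |φ z| * (C * ‖v‖))
    Filter.univ_mem ?_ ?_ ?_ ?_ (hφi.abs.mul_const _) ?_).2
  · exact Eventually.of_forall fun s =>
      (hφ.mul (hf.continuous.comp (by fun_prop))).aestronglyMeasurable
  · exact (hφ.mul (hf.continuous.comp (by fun_prop))).integrable_of_hasCompactSupport
      hφc.mul_right
  · exact (hφ.measurable.mul ((measurable_inner_gradient f v).comp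
      (measurable_const.sub measurable_id))).aestronglyMeasurable
  · refine Eventually.of_forall fun z => LipschitzWith.lipschitzOnWith ?_
    refine LipschitzWith.of_dist_le_mul fun s s' => ?_
    have hline : dist (f (a + s • v - z)) (f (a + s' • v - z)) ≤ C * (dist s s' * ‖v‖) := by
      refine (hf.dist_le_mul _ _).trans_eq ?_
      rw [dist_eq_norm, show a + s • v - z - (a + s' • v - z) = (s - s') • v by module,
        norm_smul, Real.dist_eq, Real.norm_eq_abs]
    rw [Real.dist_eq, ← mul_sub, abs_mul, Real.coe_nnabs, abs_mul, abs_abs,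
      abs_of_nonneg (by positivity : (0 : ℝ) ≤ C * ‖v‖), ← Real.dist_eq]
    calc |φ z| * dist (f (a + s • v - z)) (f (a + s' • v - z))
        ≤ |φ z| * (C * (dist s s' * ‖v‖)) := by gcongr
      _ = |φ z| * (C * ‖v‖) * dist s s' := by ring
  · have hdiff := (Measure.measurePreserving_sub_left μ (a + t • v)).quasiMeasurePreserving.ae
      (hf.ae_differentiableAt (μ := μ))
    filter_upwards [hdiff] with z hz
    rw [← sub_add_eq_add_sub] at hz
    simpa only [sub_add_eq_add_sub] using (hasDerivAt_comp_add_smul hz).const_mul (φ z)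

theorem ContDiffBump.normed_convolution_le (ρ : ContDiffBump (0 : E)) {h : E → ℝ} {x : E}
    {σ M : ℝ} (hm : Measurable h) (hM : ∀ y, |h y| ≤ M)
    (hσ : ∀ᵐ y ∂μ, dist y x < ρ.rOut → h y ≤ σ) :
    (ρ.normed μ ⋆[ContinuousLinearMap.lsmul ℝ ℝ, μ] h) x ≤ σ := by
  simp only [convolution_lsmul, smul_eq_mul]
  have hσ' := (Measure.measurePreserving_sub_left μ x).quasiMeasurePreserving.ae hσ
  calc ∫ z, ρ.normed μ z * h (x - z) ∂μ ≤ ∫ z, ρ.normed μ z * σ ∂μ := by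
        refine integral_mono_ae (ρ.integrable_normed.mul_bdd
          (hm.comp (measurable_const.sub measurable_id)).aestronglyMeasurable
          (Eventually.of_forall fun z => hM _)) (ρ.integrable_normed.mul_const σ) ?_
        filter_upwards [hσ'] with z hz
        by_cases hzρ : z ∈ Metric.ball (0 : E) ρ.rOut
        · refine mul_le_mul_of_nonneg_left (hz ?_) (ρ.nonneg_normed z)
          simpa [dist_eq_norm] using hzρ
        · rw [← ρ.support_normed_eq (μ := μ), Function.notMem_support] at hzρ
          simp [hzρ]
    _ = σ := by rw [integral_mul_const, ρ.integral_normed, one_mul]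

theorem ContDiffBump.normed_convolution_add_sub_le (ρ : ContDiffBump (0 : E))
    (hf : LipschitzWith C f) {a v : E} {σ : ℝ}
    (hσ : ∀ᵐ z ∂μ, (∃ t ∈ Set.Icc (0 : ℝ) 1, dist z (a + t • v) < ρ.rOut) →
      ⟪gradient f z, v⟫ ≤ σ) :
    (ρ.normed μ ⋆[ContinuousLinearMap.lsmul ℝ ℝ, μ] f) (a + v) -
      (ρ.normed μ ⋆[ContinuousLinearMap.lsmul ℝ ℝ, μ] f) a ≤ σ := by
  set g : ℝ → ℝ := fun s => (ρ.normed μ ⋆[ContinuousLinearMap.lsmul ℝ ℝ, μ] f) (a + s • v)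
  have hg := hasDerivAt_convolution_comp_add_smul (μ := μ) ρ.continuous_normed
    (ρ.hasCompactSupport_normed (μ := μ)) hf a v
  have hg' : ∀ t ∈ interior (Set.Icc (0 : ℝ) 1), deriv g t ≤ σ := by
    intro t ht
    rw [interior_Icc] at ht
    rw [(hg t).deriv]
    refine ρ.normed_convolution_le (measurable_inner_gradient f v) (M := C * ‖v‖)
      (fun y => (abs_real_inner_le_norm _ _).trans
        (by gcongr; exact norm_gradient_le_of_lipschitzWith hf y)) ?_
    filter_upwards [hσ] with z hz hzd
    exact hz ⟨t, Set.Ioo_subset_Icc_self ht, hzd⟩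
  have := (convex_Icc (0 : ℝ) 1).image_sub_le_mul_sub_of_deriv_le
    (fun t _ => (hg t).continuousAt.continuousWithinAt)
    (fun t _ => (hg t).differentiableAt.differentiableWithinAt) hg' 0 (by simp) 1 (by simp)
    zero_le_one
  simpa [g] using this

theorem LipschitzWith.sub_le_of_ae_inner_gradient_le (hf : LipschitzWith C f) {a v : E}
    {σ δ : ℝ} (hδ : 0 < δ)
    (hσ : ∀ᵐ z ∂μ, (∃ t ∈ Set.Icc (0 : ℝ) 1, dist z (a + t • v) < δ) →
      ⟪gradient f z, v⟫ ≤ σ) :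
    f (a + v) - f a ≤ σ := by
  let ρ : ℕ → ContDiffBump (0 : E) := fun n =>
    ⟨δ / (n + 2) / 2, δ / (n + 2), by positivity, half_lt_self (by positivity)⟩
  have hρ : Tendsto (fun n => (ρ n).rOut) atTop (𝓝 0) := by
    have := (tendsto_const_div_atTop_nhds_zero_nat δ).comp (tendsto_add_atTop_nat 2)
    simpa [ρ, Function.comp_def] using this
  have hρδ : ∀ n, (ρ n).rOut < δ := fun n => by
    change δ / (n + 2) < δ
    exact div_lt_self hδ (by linarith [(n.cast_nonneg : (0 : ℝ) ≤ n)])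
  refine le_of_tendsto'
    (((ContDiffBump.convolution_tendsto_right_of_continuous (μ := μ) hρ hf.continuous (a + v)).sub
      (ContDiffBump.convolution_tendsto_right_of_continuous hρ hf.continuous a)))
    fun n => (ρ n).normed_convolution_add_sub_le hf ?_
  filter_upwards [hσ] with z hz ⟨t, ht, hzt⟩
  exact hz ⟨t, ht, hzt.trans (hρδ n)⟩

end Mollification

theorem Set.Icc_subset_of_isClosed_of_midpoint_mem {T : Set ℝ} (hT : IsClosed T)
    (hmid : ∀ a ∈ T, ∀ b ∈ T, (a + b) / 2 ∈ T) {a b : ℝ} (ha : a ∈ T) (hb : b ∈ T) :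
    Set.Icc a b ⊆ T := by
  intro t ⟨hat, htb⟩
  by_contra ht
  have hL : IsCompact (T ∩ Set.Icc a t) := isCompact_Icc.inter_left hT
  have hR : IsCompact (T ∩ Set.Icc t b) := isCompact_Icc.inter_left hT
  -- the gap of `T` around `t` is an open interval whose endpoints lie in `T`
  obtain ⟨hlT, hal, hlt⟩ := hL.sSup_mem ⟨a, ha, le_rfl, hat⟩
  obtain ⟨hrT, htr, hrb⟩ := hR.sInf_mem ⟨b, hb, htb, le_rfl⟩
  set l := sSup (T ∩ Set.Icc a t)
  set r := sInf (T ∩ Set.Icc t b)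
  have hlt' : l < t := hlt.lt_of_ne fun h => ht (h ▸ hlT)
  have htr' : t < r := htr.lt_of_ne fun h => ht (h.symm ▸ hrT)
  have hm := hmid l hlT r hrT
  rcases le_total ((l + r) / 2) t with hmt | hmt
  · have : (l + r) / 2 ≤ l := le_csSup hL.bddAbove ⟨hm, by linarith, hmt⟩
    linarith
  · have : r ≤ (l + r) / 2 := csInf_le hR.bddBelow ⟨hm, hmt, by linarith⟩
    linarith

theorem convex_of_isClosed_of_midpoint_mem {E : Type*} [AddCommGroup E] [Module ℝ E]
    [TopologicalSpace E] [ContinuousAdd E] [ContinuousSMul ℝ E] {K : Set E} (hK : IsClosed K)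
    (hmid : ∀ p ∈ K, ∀ q ∈ K, (1 / 2 : ℝ) • (p + q) ∈ K) : Convex ℝ K := by
  intro x hx y hy a b _ hb hab
  let T : Set ℝ := {t | x + t • (y - x) ∈ K}
  have hT : Set.Icc 0 1 ⊆ T := by
    refine Set.Icc_subset_of_isClosed_of_midpoint_mem (hK.preimage (by fun_prop))
      (fun s hs u hu => ?_) (by simpa [T] using hx) (by simpa [T] using hy)
    have := hmid _ hs _ hu
    rwa [show (1 / 2 : ℝ) • (x + s • (y - x) + (x + u • (y - x))) = x + ((s + u) / 2) • (y - x)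
      by module] at this
  have : x + b • (y - x) ∈ K := hT ⟨hb, by linarith⟩
  rwa [show x + b • (y - x) = a • x + b • y by rw [eq_sub_of_add_eq hab]; module] at this

theorem exists_inner_separation_of_quasiconvex {E : Type*} [NormedAddCommGroup E]
    [InnerProductSpace ℝ E] [FiniteDimensional ℝ E] {h : E → ℝ} (hc : Continuous h)
    (hqc : ∀ p q, h ((1 / 2 : ℝ) • (p + q)) ≤ max (h p) (h q)) {μ : ℝ}
    (hbdd : Bornology.IsBounded {q | h q ≤ μ + 1}) {q₀ : E} (hq₀ : μ < h q₀) :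
    ∃ e : E, ∃ c δ : ℝ, 0 < δ ∧ c < ⟪e, q₀⟫ ∧ ∀ q, h q ≤ μ + δ → ⟪e, q⟫ < c := by
  have hK : IsClosed {q | h q ≤ μ} := isClosed_le hc continuous_const
  obtain ⟨f, c, hfK, hfq₀⟩ := geometric_hahn_banach_closed_point
    (convex_of_isClosed_of_midpoint_mem hK fun p hp q hq => (hqc p q).trans (max_le hp hq)) hK
    hq₀.not_ge
  have hS : IsCompact ({q | h q ≤ μ + 1} ∩ {q | c ≤ f q}) :=
    Metric.isCompact_of_isClosed_isBounded
      ((isClosed_le hc continuous_const).inter (isClosed_le continuous_const f.continuous))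
      (hbdd.subset Set.inter_subset_left)
  obtain ⟨a, hμa, ha⟩ := hS.exists_forall_le' hc.continuousOn
    fun q ⟨_, hq⟩ => lt_of_not_ge fun hqK => (hfK q hqK).not_ge hq
  refine ⟨(InnerProductSpace.toDual ℝ E).symm f, c, min 1 ((a - μ) / 2), by positivity, ?_,
    fun q hq => ?_⟩
  · rwa [InnerProductSpace.toDual_symm_apply]
  rw [InnerProductSpace.toDual_symm_apply]
  by_contra! hcq
  have := ha q ⟨hq.trans (by gcongr; exact min_le_left _ _), hcq⟩
  linarith [min_le_right 1 ((a - μ) / 2)]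

/-- `LowerSlopeGE f a` means `liminf_{‖y‖ → ∞} f y / ‖y‖ ≥ a`. -/
def LowerSlopeGE {E : Type*} [SeminormedAddCommGroup E] (f : E → ℝ) (a : ℝ) : Prop :=
  ∀ b < a, ∀ᶠ y in cobounded E, b * ‖y‖ ≤ f y

namespace LowerSlopeGE

variable {E : Type*} [SeminormedAddCommGroup E] {f g : E → ℝ} {a a' : ℝ}

theorem add (hf : LowerSlopeGE f a) (hg : LowerSlopeGE g a') :
    LowerSlopeGE (fun y => f y + g y) (a + a') := by
  intro b hb
  filter_upwards [hf (a - (a + a' - b) / 2) (by linarith),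
    hg (a' - (a + a' - b) / 2) (by linarith)] with y hfy hgy
  linarith

theorem mono (hf : LowerSlopeGE f a) (hfg : ∀ y, f y ≤ g y) : LowerSlopeGE g a :=
  fun b hb => (hf b hb).mono fun y hy => hy.trans (hfg y)

theorem const_mul (hf : LowerSlopeGE f a) {c : ℝ} (hc : 0 ≤ c) :
    LowerSlopeGE (fun y => c * f y) (c * a) := by
  rcases hc.lt_or_eq with hc | rfl
  · intro b hb
    filter_upwards [hf (b / c) (by rwa [div_lt_iff₀' hc])] with y hy
    calc b * ‖y‖ = c * (b / c * ‖y‖) := by field_simp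
      _ ≤ c * f y := by gcongr
  · intro b hb
    rw [zero_mul] at hb
    exact Eventually.of_forall fun y => by
      simpa using mul_nonpos_of_nonpos_of_nonneg hb.le (norm_nonneg y)

end LowerSlopeGE

theorem lowerSlopeGE_const {E : Type*} [SeminormedAddCommGroup E] (c : ℝ) :
    LowerSlopeGE (fun _ : E => c) 0 := by
  intro b hb
  filter_upwards [eventually_cobounded_le_norm (c / b)] with y hy
  rwa [div_le_iff_of_neg hb, mul_comm] at hy

theorem LipschitzWith.lowerSlopeGE {E : Type*} [SeminormedAddCommGroup E] {K : ℝ≥0}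
    {f : E → ℝ} (hf : LipschitzWith K f) : LowerSlopeGE f (-K) := by
  intro b hb
  filter_upwards [eventually_cobounded_le_norm (|f 0| / (-K - b))] with y hy
  rw [div_le_iff₀ (by linarith)] at hy
  have := hf.dist_le_mul y 0
  rw [Real.dist_eq, dist_zero_right] at this
  linarith [neg_abs_le (f y - f 0), neg_abs_le (f 0)]

theorem lowerSlopeGE_zero_iff {E : Type*} [SeminormedAddCommGroup E] {f : E → ℝ} :
    LowerSlopeGE f 0 ↔ ∀ ε : ℝ, 0 < ε → ∃ R : ℝ, ∀ y : E, R ≤ ‖y‖ → -ε ≤ f y / ‖y‖ := by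
  simp only [LowerSlopeGE, hasBasis_cobounded_norm.eventually_iff, true_and, Set.mem_ofPred_eq]
  constructor
  · intro h ε hε
    obtain ⟨R, hR⟩ := h (-ε) (by linarith)
    refine ⟨max R 1, fun y hy => ?_⟩
    rw [le_div_iff₀ (by linarith [le_max_right R 1])]
    exact hR ((le_max_left R 1).trans hy)
  · intro h b hb
    obtain ⟨R, hR⟩ := h (-b) (by linarith)
    refine ⟨max R 1, fun y hy => ?_⟩
    have := hR y ((le_max_left R 1).trans hy)
    rwa [neg_neg, le_div_iff₀ (by linarith [le_max_right R 1])] at this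

section Levels

variable {Λ : ℝ → ℝ → ℝ}

theorem iterate_lt_of_lt (hΛstrict : ∀ a b : ℝ, a ≠ b → Λ a b < max a b) {a b : ℝ}
    (hab : a < b) (n : ℕ) : (Λ · b)^[n] a < b := by
  induction n with
  | zero => exact hab
  | succ n ih =>
    rw [Function.iterate_succ_apply']
    simpa [max_eq_right ih.le] using hΛstrict _ b ih.ne

theorem continuous_iterate_right (hΛcont : Continuous fun m : ℝ × ℝ => Λ m.1 m.2) (a : ℝ)
    (n : ℕ) : Continuous fun b => (Λ · b)^[n] a := by
  induction n with
  | zero => exact continuous_const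
  | succ n ih =>
    simp only [Function.iterate_succ_apply']
    exact hΛcont.comp (ih.prodMk continuous_id)

theorem exists_pos_iterate_add_lt (hΛcont : Continuous fun m : ℝ × ℝ => Λ m.1 m.2)
    (hΛstrict : ∀ a b : ℝ, a ≠ b → Λ a b < max a b) {a μ : ℝ} (ha : a < μ) (n : ℕ) :
    ∃ s > 0, (Λ · (μ + s))^[n] a < μ := by
  have hcont : ContinuousAt (fun s => (Λ · (μ + s))^[n] a) 0 :=
    ((continuous_iterate_right hΛcont a n).comp (continuous_const.add continuous_id)).continuousAt
  have hlt : ∀ᶠ s in 𝓝 (0 : ℝ), (Λ · (μ + s))^[n] a < μ :=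
    hcont.eventually_lt continuousAt_const (by simpa using iterate_lt_of_lt hΛstrict ha n)
  obtain ⟨s, hs, hs0⟩ := ((hlt.filter_mono nhdsWithin_le_nhds).and
    (self_mem_nhdsWithin : Set.Ioi (0 : ℝ) ∈ 𝓝[>] 0)).exists
  exact ⟨s, hs0, hs⟩

end Levels

section Hamiltonian

variable {d : ℕ} {H : Ed d → Ed d → ℝ} {Λ : ℝ → ℝ → ℝ} {μ : ℝ}

def BoundedOnBalls (H : Ed d → Ed d → ℝ) : Prop :=
  ∀ R : ℝ, 0 < R → ∃ M : ℝ, ∀ p y : Ed d, ‖p‖ ≤ R → |H p y| ≤ M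

def UnifContOnBalls (H : Ed d → Ed d → ℝ) : Prop :=
  ∀ R : ℝ, 0 < R → ∀ ε : ℝ, 0 < ε → ∃ δ : ℝ, 0 < δ ∧ ∀ p p' y y' : Ed d,
    ‖p‖ ≤ R → ‖p'‖ ≤ R → ‖p - p'‖ < δ → ‖y - y'‖ < δ → |H p y - H p' y'| < ε

def Coercive (H : Ed d → Ed d → ℝ) : Prop :=
  ∀ M : ℝ, ∃ R : ℝ, ∀ p y : Ed d, R ≤ ‖p‖ → M ≤ H p y

def IsLipSubsolution (H : Ed d → Ed d → ℝ) (μ : ℝ) (w : Ed d → ℝ) : Prop :=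
  w ∈ LipFuns d ∧ ∀ᵐ z ∂volume, H (gradient w z) z ≤ μ

theorem IsLipSubsolution.mono {w : Ed d → ℝ} {ν : ℝ} (hw : IsLipSubsolution H μ w) (hμν : μ ≤ ν) :
    IsLipSubsolution H ν w :=
  ⟨hw.1, hw.2.mono fun _ hz => hz.trans hμν⟩

theorem exists_lower_bound_H (hreg_bdd : BoundedOnBalls H) (hcoer : Coercive H) :
    ∃ m, ∀ p y, m ≤ H p y := by
  obtain ⟨R, hR⟩ := hcoer 0
  obtain ⟨M, hM⟩ := hreg_bdd (max R 1) (lt_max_of_lt_right one_pos)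
  refine ⟨min 0 (-M), fun p y => ?_⟩
  rcases le_total ‖p‖ (max R 1) with hp | hp
  · exact (min_le_right _ _).trans (neg_le_of_abs_le (hM p y hp))
  · exact (min_le_left _ _).trans (hR p y ((le_max_left R 1).trans hp))

theorem exists_norm_le_of_H_le (hcoer : Coercive H) (μ : ℝ) : ∃ L, ∀ q z, H q z ≤ μ → ‖q‖ ≤ L := by
  obtain ⟨R, hR⟩ := hcoer (μ + 1)
  exact ⟨R, fun q z hq => le_of_not_gt fun h => by linarith [hR q z h.le]⟩

theorem exists_H_add_gradient_le (hreg_bdd : BoundedOnBalls H) (p : Ed d) {w : Ed d → ℝ}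
    (hw : w ∈ LipFuns d) : ∃ M, ∀ y, H (p + gradient w y) y ≤ M := by
  obtain ⟨C, hC⟩ := hw
  obtain ⟨M, hM⟩ := hreg_bdd (‖p‖ + C + 1) (by positivity)
  refine ⟨M, fun y => (le_abs_self _).trans (hM _ _ ?_)⟩
  linarith [norm_add_le p (gradient w y), norm_gradient_le_of_lipschitzWith hC y]

theorem zero_mem_SLplus : (0 : Ed d → ℝ) ∈ SLplus d :=
  ⟨⟨0, LipschitzWith.const 0⟩, fun ε hε => ⟨0, fun y _ => by simp [hε.le]⟩⟩

theorem ae_H_add_gradient_le_essSup (hreg_bdd : BoundedOnBalls H) (p : Ed d) {w : Ed d → ℝ}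
    (hw : w ∈ LipFuns d) :
    ∀ᵐ y, H (p + gradient w y) y ≤ essSup (fun y => H (p + gradient w y) y) volume :=
  ae_le_essSup (isBoundedUnder_of (exists_H_add_gradient_le hreg_bdd p hw))

theorem exists_isLipSubsolution_of_Hstar_lt (hreg_bdd : BoundedOnBalls H) (h : Hstar d H < μ) :
    ∃ u, ∃ a < μ, IsLipSubsolution H a u := by
  obtain ⟨_, ⟨u, hu, rfl⟩, hlt⟩ :=
    exists_lt_of_csInf_lt (by exact ⟨_, 0, zero_mem_SLplus.1, rfl⟩) h
  exact ⟨u, _, hlt, hu, by simpa using ae_H_add_gradient_le_essSup hreg_bdd 0 hu⟩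

theorem exists_mem_SLplus_of_HbarPlus_lt (hreg_bdd : BoundedOnBalls H) {p : Ed d}
    (h : HbarPlus d H p < μ) : ∃ w ∈ SLplus d, ∀ᵐ y, H (p + gradient w y) y ≤ μ := by
  obtain ⟨_, ⟨w, hw, rfl⟩, hlt⟩ :=
    exists_lt_of_csInf_lt (by exact ⟨_, 0, zero_mem_SLplus, rfl⟩) h
  exact ⟨w, hw, (ae_H_add_gradient_le_essSup hreg_bdd p hw.1).mono fun y hy => hy.trans hlt.le⟩

theorem HbarPlus_le_of_ae_le (hreg_bdd : BoundedOnBalls H) (hcoer : Coercive H) {p : Ed d}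
    {w : Ed d → ℝ} (hw : w ∈ SLplus d) (hae : ∀ᵐ y, H (p + gradient w y) y ≤ μ) :
    HbarPlus d H p ≤ μ := by
  obtain ⟨m, hm⟩ := exists_lower_bound_H hreg_bdd hcoer
  have hbdd : BddBelow
      {t | ∃ w ∈ SLplus d, t = essSup (fun y => H (p + gradient w y) y) volume} := by
    refine ⟨m, ?_⟩
    rintro _ ⟨w', hw', rfl⟩
    exact le_limsup_of_frequently_le (Frequently.of_forall fun y => hm _ y)
      (isBoundedUnder_of (exists_H_add_gradient_le hreg_bdd p hw'.1))
  exact (csInf_le hbdd ⟨w, hw, rfl⟩).trans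
    (essSup_le_of_ae_le μ hae (isCoboundedUnder_le_of_le _ fun y => hm _ y))

theorem IsLipSubsolution.sub_le {L : ℝ} (hL : ∀ q z, H q z ≤ μ → ‖q‖ ≤ L) {w : Ed d → ℝ}
    (hw : IsLipSubsolution H μ w) (y₁ y₂ : Ed d) : w y₁ - w y₂ ≤ L * ‖y₁ - y₂‖ := by
  obtain ⟨⟨C, hC⟩, hae⟩ := hw
  have := hC.sub_le_of_ae_inner_gradient_le (μ := volume) (a := y₂) (v := y₁ - y₂)
    (σ := L * ‖y₁ - y₂‖) one_pos
    (by filter_upwards [hae] with z hz _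
        exact (real_inner_le_norm _ _).trans (by gcongr; exact hL _ _ hz))
  simpa using this

theorem IsLipSubsolution.sub_le_of_inner_le {w : Ed d → ℝ} (hw : IsLipSubsolution H μ w)
    {z₀ e : Ed d} {c r t : ℝ} (hr : 0 < r)
    (hloc : ∀ q z, dist z z₀ < r → H q z ≤ μ → ⟪q, e⟫ ≤ c) (ht : 0 ≤ t)
    (hte : t * ‖e‖ ≤ r / 2) : w (z₀ + t • e) - w z₀ ≤ t * c := by
  obtain ⟨⟨C, hC⟩, hae⟩ := hw
  refine hC.sub_le_of_ae_inner_gradient_le (μ := volume) (half_pos hr) ?_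
  filter_upwards [hae] with z hz ⟨s, ⟨hs0, hs1⟩, hzs⟩
  have hseg : dist (z₀ + s • t • e) z₀ ≤ t * ‖e‖ := by
    rw [dist_eq_norm, add_sub_cancel_left, norm_smul, norm_smul, Real.norm_of_nonneg hs0,
      Real.norm_of_nonneg ht]
    exact mul_le_of_le_one_left (by positivity) hs1
  rw [real_inner_smul_right]
  exact mul_le_mul_of_nonneg_left
    (hloc _ _ (by linarith [dist_triangle z (z₀ + s • t • e) z₀]) hz) ht

theorem le_mMu {L : ℝ} (hL : ∀ q z, H q z ≤ μ → ‖q‖ ≤ L) {w : Ed d → ℝ}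
    (hw : IsLipSubsolution H μ w) (y x : Ed d) : w y - w x ≤ mMu d H μ y x := by
  refine le_csSup ⟨L * ‖y - x‖, ?_⟩ ⟨w, hw.1, hw.2, rfl⟩
  rintro _ ⟨w', hw', hae, rfl⟩
  exact IsLipSubsolution.sub_le hL ⟨hw', hae⟩ y x

theorem mMu_le_add {L : ℝ} (hL : ∀ q z, H q z ≤ μ → ‖q‖ ≤ L)
    (hne : ∃ u, IsLipSubsolution H μ u) {x y y' : Ed d} {c : ℝ}
    (h : ∀ w, IsLipSubsolution H μ w → w y - w y' ≤ c) : mMu d H μ y x ≤ mMu d H μ y' x + c := by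
  obtain ⟨u, hu⟩ := hne
  refine csSup_le ⟨_, u, hu.1, hu.2, rfl⟩ ?_
  rintro _ ⟨w, hw, hae, rfl⟩
  linarith [h w ⟨hw, hae⟩, le_mMu hL ⟨hw, hae⟩ y' x]

theorem lipschitzWith_mMu {L : ℝ} (hL : ∀ q z, H q z ≤ μ → ‖q‖ ≤ L)
    (hne : ∃ u, IsLipSubsolution H μ u) (x : Ed d) :
    LipschitzWith L.toNNReal (mMu d H μ · x) :=
  LipschitzWith.of_le_add_mul' L fun y y' =>
    mMu_le_add hL hne fun w hw => by simpa [dist_eq_norm] using hw.sub_le hL y y'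

theorem H_gradient_mMu_le (hHcont : Continuous fun q : Ed d × Ed d => H q.1 q.2)
    (hreg_uc : UnifContOnBalls H) (hcoer : Coercive H)
    (hqc : ∀ p q y : Ed d, H ((1/2 : ℝ) • (p + q)) y ≤ max (H p y) (H q y))
    (hne : ∃ u, IsLipSubsolution H μ u) {x z₀ : Ed d}
    (hdiff : DifferentiableAt ℝ (mMu d H μ · x) z₀) :
    H (gradient (mMu d H μ · x) z₀) z₀ ≤ μ := by
  by_contra! hq
  obtain ⟨L, hL⟩ := exists_norm_le_of_H_le hcoer μ
  obtain ⟨L', hL'⟩ := exists_norm_le_of_H_le hcoer (μ + 1)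
  obtain ⟨e, c, δ, hδ, hce, hsep⟩ := exists_inner_separation_of_quasiconvex (h := (H · z₀))
    (hHcont.comp (continuous_id.prodMk continuous_const)) (hqc · · z₀)
    (isBounded_iff_forall_norm_le.2 ⟨L', fun q hq => hL' q z₀ hq⟩) hq
  obtain ⟨r, hr, huc⟩ := hreg_uc (max L 1) (lt_max_of_lt_right one_pos) δ hδ
  have hloc : ∀ q z, dist z z₀ < r → H q z ≤ μ → ⟪q, e⟫ ≤ c := by
    intro q z hz hqz
    have hqL : ‖q‖ ≤ max L 1 := (hL q z hqz).trans (le_max_left _ _)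
    have := abs_lt.mp (huc q q z z₀ hqL hqL (by simpa using hr) (by rwa [← dist_eq_norm]))
    rw [real_inner_comm]
    exact (hsep q (by linarith)).le
  have hslope : ∀ᶠ t in 𝓝[>] (0 : ℝ), mMu d H μ (z₀ + t • e) x - mMu d H μ z₀ x ≤ t * c := by
    filter_upwards [Ioo_mem_nhdsGT (show 0 < r / 2 / (‖e‖ + 1) by positivity)] with t ⟨ht0, ht⟩
    have hte : t * ‖e‖ ≤ r / 2 := by
      rw [lt_div_iff₀ (by positivity)] at ht
      nlinarith [norm_nonneg e]
    linarith [mMu_le_add hL hne (x := x) fun w hw => hw.sub_le_of_inner_le hr hloc ht0.le hte]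
  have := inner_gradient_le_of_eventually_sub_le hdiff hslope
  rw [real_inner_comm] at this
  linarith

theorem isLipSubsolution_mMu (hHcont : Continuous fun q : Ed d × Ed d => H q.1 q.2)
    (hreg_uc : UnifContOnBalls H) (hcoer : Coercive H)
    (hqc : ∀ p q y : Ed d, H ((1/2 : ℝ) • (p + q)) y ≤ max (H p y) (H q y))
    (hne : ∃ u, IsLipSubsolution H μ u) (x : Ed d) :
    IsLipSubsolution H μ (mMu d H μ · x) := by
  obtain ⟨L, hL⟩ := exists_norm_le_of_H_le hcoer μ
  have hlip := lipschitzWith_mMu hL hne x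
  refine ⟨⟨_, hlip⟩, ?_⟩
  filter_upwards [hlip.ae_differentiableAt] with z hz
  exact H_gradient_mMu_le hHcont hreg_uc hcoer hqc hne hz

theorem HbarPlus_le_of_isLipSubsolution (hreg_bdd : BoundedOnBalls H) (hcoer : Coercive H)
    {m : Ed d → ℝ} (hm : IsLipSubsolution H μ m) {p : Ed d}
    (hslope : ∀ ε : ℝ, 0 < ε → ∃ R : ℝ, ∀ y : Ed d, R ≤ ‖y‖ → -ε ≤ (m y - ⟪p, y⟫) / ‖y‖) :
    HbarPlus d H p ≤ μ := by
  obtain ⟨⟨C, hC⟩, hae⟩ := hm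
  refine HbarPlus_le_of_ae_le hreg_bdd hcoer (w := fun y => m y - ⟪p, y⟫)
    ⟨⟨_, hC.sub (innerSL ℝ p).lipschitz⟩, hslope⟩ ?_
  filter_upwards [hae, hC.ae_differentiableAt] with y hy hdy
  rwa [(hdy.hasGradientAt.sub (hasGradientAt_inner_const p y)).gradient, add_sub_cancel]

theorem IsLipSubsolution.midpoint
    (hΛmono : ∀ a b a' b' : ℝ, a ≤ a' → b ≤ b' → Λ a b ≤ Λ a' b')
    (hsqc : ∀ p q y : Ed d, H ((1/2 : ℝ) • (p + q)) y ≤ Λ (H p y) (H q y))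
    {a b : ℝ} {f g : Ed d → ℝ} (hf : IsLipSubsolution H a f) (hg : IsLipSubsolution H b g) :
    IsLipSubsolution H (Λ a b) fun y => (1 / 2 : ℝ) * (f y + g y) := by
  obtain ⟨⟨Cf, hCf⟩, hf⟩ := hf
  obtain ⟨⟨Cg, hCg⟩, hg⟩ := hg
  refine ⟨⟨_, (lipschitzWith_smul (1 / 2 : ℝ)).comp (hCf.add hCg)⟩, ?_⟩
  filter_upwards [hf, hg, hCf.ae_differentiableAt, hCg.ae_differentiableAt] with z hfz hgz hdf hdg
  rw [((hdf.hasGradientAt.add hdg.hasGradientAt).const_mul (1 / 2)).gradient]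
  exact (hsqc _ _ z).trans (hΛmono _ _ _ _ hfz hgz)

theorem IsLipSubsolution.iterate_midpoint
    (hΛmono : ∀ a b a' b' : ℝ, a ≤ a' → b ≤ b' → Λ a b ≤ Λ a' b')
    (hsqc : ∀ p q y : Ed d, H ((1/2 : ℝ) • (p + q)) y ≤ Λ (H p y) (H q y))
    {a b : ℝ} {u v : Ed d → ℝ} (hu : IsLipSubsolution H a u) (hv : IsLipSubsolution H b v)
    (n : ℕ) :
    IsLipSubsolution H ((Λ · b)^[n] a)
      fun y => (1 - (1 / 2 : ℝ) ^ n) * v y + (1 / 2 : ℝ) ^ n * u y := by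
  induction n with
  | zero => simpa using hu
  | succ n ih =>
    rw [Function.iterate_succ_apply']
    convert ih.midpoint hΛmono hsqc hv using 2 with y
    ring

theorem isLipSubsolution_inner_add {p : Ed d} {w : Ed d → ℝ} (hw : w ∈ LipFuns d)
    (hae : ∀ᵐ y, H (p + gradient w y) y ≤ μ) : IsLipSubsolution H μ fun y => ⟪p, y⟫ + w y := by
  obtain ⟨C, hC⟩ := hw
  refine ⟨⟨_, (innerSL ℝ p).lipschitz.add hC⟩, ?_⟩
  filter_upwards [hae, hC.ae_differentiableAt] with y hy hdy
  rwa [((hasGradientAt_inner_const p y).add hdy.hasGradientAt).gradient]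

theorem exists_isLipSubsolution_convexComb (hreg_bdd : BoundedOnBalls H)
    (hΛcont : Continuous fun m : ℝ × ℝ => Λ m.1 m.2)
    (hΛmono : ∀ a b a' b' : ℝ, a ≤ a' → b ≤ b' → Λ a b ≤ Λ a' b')
    (hΛstrict : ∀ a b : ℝ, a ≠ b → Λ a b < max a b)
    (hsqc : ∀ p q y : Ed d, H ((1/2 : ℝ) • (p + q)) y ≤ Λ (H p y) (H q y))
    {a : ℝ} {u : Ed d → ℝ} (hu : IsLipSubsolution H a u) (ha : a < μ) {p : Ed d}
    (hp : HbarPlus d H p ≤ μ) (n : ℕ) :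
    ∃ w ∈ SLplus d, IsLipSubsolution H μ
      fun y => (1 - (1 / 2 : ℝ) ^ n) * (⟪p, y⟫ + w y) + (1 / 2 : ℝ) ^ n * u y := by
  obtain ⟨s, hs, hlt⟩ := exists_pos_iterate_add_lt hΛcont hΛstrict ha n
  obtain ⟨w, hw, hae⟩ :=
    exists_mem_SLplus_of_HbarPlus_lt hreg_bdd (hp.trans_lt (lt_add_of_pos_right μ hs))
  exact ⟨w, hw,
    (hu.iterate_midpoint hΛmono hsqc (isLipSubsolution_inner_add hw.1 hae) n).mono hlt.le⟩

theorem lowerSlopeGE_mMu_sub_inner (hreg_bdd : BoundedOnBalls H) (hcoer : Coercive H)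
    (hΛcont : Continuous fun m : ℝ × ℝ => Λ m.1 m.2)
    (hΛmono : ∀ a b a' b' : ℝ, a ≤ a' → b ≤ b' → Λ a b ≤ Λ a' b')
    (hΛstrict : ∀ a b : ℝ, a ≠ b → Λ a b < max a b)
    (hsqc : ∀ p q y : Ed d, H ((1/2 : ℝ) • (p + q)) y ≤ Λ (H p y) (H q y))
    {a : ℝ} {u : Ed d → ℝ} (hu : IsLipSubsolution H a u) (ha : a < μ) {p : Ed d}
    (hp : HbarPlus d H p ≤ μ) (x : Ed d) :
    LowerSlopeGE (fun y => mMu d H μ y x - ⟪p, y⟫) 0 := by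
  obtain ⟨L, hL⟩ := exists_norm_le_of_H_le hcoer μ
  obtain ⟨C, hC⟩ := hu.1
  set K : ℝ≥0 := C + ‖innerSL ℝ p‖₊
  have hK : LowerSlopeGE (fun y => u y - ⟪p, y⟫) (-K) := by
    simpa only [innerSL_apply_apply] using (hC.sub (innerSL ℝ p).lipschitz).lowerSlopeGE
  intro b hb
  -- the weight of `u` in the competitor is made so small that its linear growth is below `-b`
  obtain ⟨n, hn⟩ := (((tendsto_pow_atTop_nhds_zero_of_lt_one (by norm_num : (0 : ℝ) ≤ 1 / 2)
    (by norm_num)).mul_const (K : ℝ)).eventually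
    (gt_mem_nhds (show 0 * (K : ℝ) < -b by linarith))).exists
  obtain ⟨w, hw, hG⟩ := exists_isLipSubsolution_convexComb hreg_bdd hΛcont hΛmono hΛstrict
    hsqc hu ha hp n
  set c := (1 / 2 : ℝ) ^ n
  have hc : c ≤ 1 := pow_le_one₀ (by norm_num) (by norm_num)
  have hslope := (((lowerSlopeGE_zero_iff.2 hw.2).const_mul (sub_nonneg.2 hc)).add
    (hK.const_mul (by positivity : 0 ≤ c))).add (lowerSlopeGE_const
      (-((1 - c) * (⟪p, x⟫ + w x) + c * u x)))
  refine (hslope.mono fun y => ?_) b (by linarith)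
  linarith [le_mMu hL hG y x]

end Hamiltonian

theorem statement_8_general
    (d : ℕ)
    (H : Ed d → Ed d → ℝ)
    (hHcont : Continuous fun q : Ed d × Ed d => H q.1 q.2)
    (hreg_bdd : ∀ R : ℝ, 0 < R → ∃ M : ℝ, ∀ p y : Ed d, ‖p‖ ≤ R → |H p y| ≤ M)
    (hreg_uc : ∀ R : ℝ, 0 < R → ∀ ε : ℝ, 0 < ε → ∃ δ : ℝ, 0 < δ ∧ ∀ p p' y y' : Ed d,
      ‖p‖ ≤ R → ‖p'‖ ≤ R → ‖p - p'‖ < δ → ‖y - y'‖ < δ → |H p y - H p' y'| < ε)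
    (hcoer : ∀ M : ℝ, ∃ R : ℝ, ∀ p y : Ed d, R ≤ ‖p‖ → M ≤ H p y)
    (hqc : ∀ p q y : Ed d, H ((1/2 : ℝ) • (p + q)) y ≤ max (H p y) (H q y))
    (Λ : ℝ → ℝ → ℝ)
    (hΛcont : Continuous fun m : ℝ × ℝ => Λ m.1 m.2)
    (hΛmono : ∀ a b a' b' : ℝ, a ≤ a' → b ≤ b' → Λ a b ≤ Λ a' b')
    (hΛstrict : ∀ a b : ℝ, a ≠ b → Λ a b < max a b)
    (hsqc : ∀ p q y : Ed d, H ((1/2 : ℝ) • (p + q)) y ≤ Λ (H p y) (H q y))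
    :
    ∀ μ : ℝ, Hstar d H < μ → ∀ p x : Ed d,
      ((∀ ε : ℝ, 0 < ε → ∃ R : ℝ, ∀ y : Ed d, R ≤ ‖y‖ →
          -ε ≤ (mMu d H μ y x - ⟪p, y⟫) / ‖y‖) ↔ HbarPlus d H p ≤ μ) := by
  intro μ hμ p x
  obtain ⟨u, a, ha, hu⟩ := exists_isLipSubsolution_of_Hstar_lt hreg_bdd hμ
  constructor
  · exact HbarPlus_le_of_isLipSubsolution hreg_bdd hcoer
      (isLipSubsolution_mMu hHcont hreg_uc hcoer hqc ⟨u, hu.mono ha.le⟩ x)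
  · exact fun hp => lowerSlopeGE_zero_iff.1
      (lowerSlopeGE_mMu_sub_inner hreg_bdd hcoer hΛcont hΛmono hΛstrict hsqc hu ha hp x)

/-- characterization of H̄₊ via the sublinearity of m_μ(·,x) − p·(·). -/
theorem statement_8
    (d : ℕ) (hd : 0 < d)
    (H : Ed d → Ed d → ℝ)
    (hHcont : Continuous fun q : Ed d × Ed d => H q.1 q.2)
    (hreg_bdd : ∀ R : ℝ, 0 < R → ∃ M : ℝ, ∀ p y : Ed d, ‖p‖ ≤ R → |H p y| ≤ M)
    (hreg_uc : ∀ R : ℝ, 0 < R → ∀ ε : ℝ, 0 < ε → ∃ δ : ℝ, 0 < δ ∧ ∀ p p' y y' : Ed d,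
      ‖p‖ ≤ R → ‖p'‖ ≤ R → ‖p - p'‖ < δ → ‖y - y'‖ < δ → |H p y - H p' y'| < ε)
    (hcoer : ∀ M : ℝ, ∃ R : ℝ, ∀ p y : Ed d, R ≤ ‖p‖ → M ≤ H p y)
    (hqc : ∀ p q y : Ed d, H ((1/2 : ℝ) • (p + q)) y ≤ max (H p y) (H q y))
    (Λ : ℝ → ℝ → ℝ)
    (hΛcont : Continuous fun m : ℝ × ℝ => Λ m.1 m.2)
    (hΛmono : ∀ a b a' b' : ℝ, a ≤ a' → b ≤ b' → Λ a b ≤ Λ a' b')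
    (hΛstrict : ∀ a b : ℝ, a ≠ b → Λ a b < max a b)
    (hsqc : ∀ p q y : Ed d, H ((1/2 : ℝ) • (p + q)) y ≤ Λ (H p y) (H q y))
    :
    ∀ μ : ℝ, Hstar d H < μ → ∀ p x : Ed d,
      ((∀ ε : ℝ, 0 < ε → ∃ R : ℝ, ∀ y : Ed d, R ≤ ‖y‖ →
          -ε ≤ (mMu d H μ y x - ⟪p, y⟫) / ‖y‖) ↔ HbarPlus d H p ≤ μ) :=
  statement_8_general d H hHcont hreg_bdd hreg_uc hcoer hqc Λ hΛcont hΛmono hΛstrict hsqc
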